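/- arXiv:2001.10315 — 2 statements merged into one kernel-verified Lean document; each statement's English description precedes it below -/
import Mathlib

section
/- Let m ≥ 2. If n is an m-Carmichael number and k is a positive integer, then n^k is also an m-Carmichael number. -/
open Finset Matrix

noncomputable def Dm (m n : ℕ) : ℕ :=
  (∏ j ∈ Finset.Icc 1 m, (Polynomial.cyclotomic j ℤ).eval (n : ℤ)).toNat

def nablam (m n : ℕ) : ℕ := ∏ p ∈ n.primeFactors, p ^ (Nat.clog p m - 1)

noncomputable def Km (m n : ℕ) : ℕ := n * nablam m n * Dm m n

def IsMCarmichael (m n : ℕ) : Prop :=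
  ¬ n.Prime ∧ 2 ≤ n ∧ ∀ A : GL (Fin m) (ZMod n), A ^ Km m n = 1

/-!
For `A ∈ GL_m(ℤ/n^kℤ)`, the power `A ^ K_m(n)` reduces to the identity mod `n`, so it has the
form `1 + n B`, and then `(1 + n B) ^ n^(k-1) = 1` mod `n^k` by lifting the exponent. It remains to
see that `K_m(n) · n^(k-1)` divides `K_m(n^k)`: `∇_m` only sees the prime factors, and
`D_m(n) ∣ D_m(n^k)` because `Φ_j(X)` divides `Φ_{j / gcd(j,k)}(X^k)` (the `k`-th power of a primitive
`j`-th root of unity is a primitive `j / gcd(j,k)`-th one) while distinct cyclotomic polynomials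
are coprime over `ℚ`.
-/

open Polynomial

lemma IsPrimitiveRoot.pow_div_gcd {M : Type*} [CommMonoid M] {ζ : M} {j : ℕ}
    (h : IsPrimitiveRoot ζ j) {k : ℕ} (hk : k ≠ 0) : IsPrimitiveRoot (ζ ^ k) (j / j.gcd k) := by
  rw [h.eq_orderOf, ← orderOf_pow' ζ hk]
  exact IsPrimitiveRoot.orderOf _

lemma cyclotomic_dvd_expand_cyclotomic {j k : ℕ} (hj : 0 < j) (hk : k ≠ 0) :
    cyclotomic j ℚ ∣ expand ℚ k (cyclotomic (j / j.gcd k) ℚ) := by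
  have hζ := Complex.isPrimitiveRoot_exp j hj.ne'
  rw [cyclotomic_eq_minpoly_rat hζ hj]
  apply minpoly.dvd
  rw [expand_aeval, aeval_def, eval₂_eq_eval_map, map_cyclotomic]
  exact (isRoot_cyclotomic_iff_charZero (Nat.div_pos (Nat.gcd_le_left k hj)
    (Nat.gcd_pos_of_pos_left k hj))).2 (hζ.pow_div_gcd hk)

lemma prod_cyclotomic_rat_dvd_expand (m : ℕ) {k : ℕ} (hk : k ≠ 0) :
    (∏ j ∈ Icc 1 m, cyclotomic j ℚ) ∣ expand ℚ k (∏ j ∈ Icc 1 m, cyclotomic j ℚ) := by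
  have hdvd : ∀ j ∈ Icc 1 m, cyclotomic j ℚ ∣ expand ℚ k (∏ i ∈ Icc 1 m, cyclotomic i ℚ) := by
    intro j hj
    obtain ⟨hj, hjm⟩ := mem_Icc.mp hj
    have hmem : j / j.gcd k ∈ Icc 1 m := mem_Icc.mpr
      ⟨Nat.div_pos (Nat.gcd_le_left k hj) (Nat.gcd_pos_of_pos_left k hj),
        (Nat.div_le_self _ _).trans hjm⟩
    have hfactor := map_dvd (expand ℚ k) (dvd_prod_of_mem (cyclotomic · ℚ) hmem)
    exact (cyclotomic_dvd_expand_cyclotomic hj hk).trans hfactor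
  exact prod_dvd_of_coprime (fun a _ b _ hab => (cyclotomic.isCoprime_rat hab :)) hdvd

lemma prod_cyclotomic_dvd_expand (m : ℕ) {k : ℕ} (hk : k ≠ 0) :
    (∏ j ∈ Icc 1 m, cyclotomic j ℤ) ∣ expand ℤ k (∏ j ∈ Icc 1 m, cyclotomic j ℤ) := by
  have hmonic : (∏ j ∈ Icc 1 m, cyclotomic j ℤ).Monic :=
    monic_prod_of_monic _ _ fun j _ => cyclotomic.monic j ℤ
  rw [← map_dvd_map (Int.castRingHom ℚ) Int.cast_injective hmonic, map_expand,
    Polynomial.map_prod]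
  simpa only [map_cyclotomic] using prod_cyclotomic_rat_dvd_expand m hk

lemma Dm_eq_eval (m : ℕ) {n : ℕ} (hn : 0 < n) :
    (Dm m n : ℤ) = (∏ j ∈ Icc 1 m, cyclotomic j ℤ).eval (n : ℤ) := by
  rw [Dm, eval_prod, Int.toNat_of_nonneg]
  exact prod_nonneg fun j _ => cyclotomic_nonneg j (by exact_mod_cast hn)

lemma Dm_dvd_Dm_pow (m : ℕ) {n k : ℕ} (hn : 0 < n) (hk : k ≠ 0) : Dm m n ∣ Dm m (n ^ k) := by
  rw [← Int.natCast_dvd_natCast, Dm_eq_eval m hn, Dm_eq_eval m (pow_pos hn k), Nat.cast_pow,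
    ← expand_eval]
  exact eval_dvd (prod_cyclotomic_dvd_expand m hk)

lemma Km_mul_pow_dvd_Km_pow_succ (m : ℕ) {n : ℕ} (hn : 0 < n) (k : ℕ) :
    Km m n * n ^ k ∣ Km m (n ^ (k + 1)) := by
  have hnabla : nablam m (n ^ (k + 1)) = nablam m n := by
    rw [nablam, Nat.primeFactors_pow _ k.succ_ne_zero, nablam]
  rw [Km, Km, hnabla, show n * nablam m n * Dm m n * n ^ k = n ^ (k + 1) * nablam m n * Dm m n by
    ring]
  exact mul_dvd_mul_left _ (Dm_dvd_Dm_pow m hn k.succ_ne_zero)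

lemma natCast_pow_succ_dvd_one_add_mul_pow_sub_one {A : Type*} [Ring A] (n k : ℕ) (b : A) :
    (n : A) ^ (k + 1) ∣ (1 + n * b) ^ n ^ k - 1 := by
  -- lift the exponent in the commutative ring `ℤ[X]`, then evaluate at `b`
  have h := dvd_sub_pow_of_dvd_sub (R := ℤ[X]) (a := 1 + (n : ℤ[X]) * X) (b := 1) ⟨X, by ring⟩ k
  simpa using map_dvd (aeval b) h

lemma ZMod.exists_eq_natCast_mul_of_castHom_eq_zero {N d : ℕ} (hd : d ∣ N) {x : ZMod N}
    (hx : ZMod.castHom hd (ZMod d) x = 0) : ∃ y, x = d * y := by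
  obtain ⟨z, rfl⟩ := ZMod.intCast_surjective x
  rw [map_intCast, ZMod.intCast_zmod_eq_zero_iff_dvd] at hx
  obtain ⟨c, rfl⟩ := hx
  exact ⟨c, by push_cast; rfl⟩

section

variable {ι : Type*} [Fintype ι] [DecidableEq ι]

lemma Matrix.exists_eq_one_add_natCast_mul {N d : ℕ} (hd : d ∣ N) {M : Matrix ι ι (ZMod N)}
    (hM : M.map (ZMod.castHom hd (ZMod d)) = 1) : ∃ B, M = 1 + (d : Matrix ι ι (ZMod N)) * B := by
  have hker : (M - 1).map (ZMod.castHom hd (ZMod d)) = 0 := by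
    rw [← RingHom.mapMatrix_apply, map_sub, RingHom.mapMatrix_apply, hM, map_one, sub_self]
  choose B hB using fun i j =>
    ZMod.exists_eq_natCast_mul_of_castHom_eq_zero hd (congrFun (congrFun hker i) j)
  refine ⟨Matrix.of B, ?_⟩
  rw [← sub_eq_iff_eq_add', ← nsmul_eq_mul]
  ext i j
  simp [hB]

lemma Matrix.GeneralLinearGroup.pow_eq_one_of_map_eq_one {n k : ℕ} {A : GL ι (ZMod (n ^ (k + 1)))}
    (hA : GeneralLinearGroup.map (ZMod.castHom (dvd_pow_self n k.succ_ne_zero) (ZMod n)) A = 1) :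
    A ^ n ^ k = 1 := by
  obtain ⟨B, hB⟩ := Matrix.exists_eq_one_add_natCast_mul _ (congrArg Units.val hA)
  have hn : (n : Matrix ι ι (ZMod (n ^ (k + 1)))) ^ (k + 1) = 0 := by
    rw [← Nat.cast_pow, ← map_natCast (Matrix.scalar ι), ZMod.natCast_self, map_zero]
  have h := natCast_pow_succ_dvd_one_add_mul_pow_sub_one n k B
  rw [← hB, hn, zero_dvd_iff, sub_eq_zero] at h
  exact Units.ext (by rw [Units.val_pow_eq_pow_val, h, Units.val_one])

end

theorem stmt11_general (m : ℕ) (n : ℕ) (h : IsMCarmichael m n)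
    (k : ℕ) (hk : 0 < k) : IsMCarmichael m (n ^ k) := by
  obtain ⟨hnp, hn, hA⟩ := h
  obtain ⟨k, rfl⟩ := Nat.exists_eq_add_one_of_ne_zero hk.ne'
  refine ⟨fun hp => hnp ?_, hn.trans (Nat.le_self_pow k.succ_ne_zero n), fun A => ?_⟩
  · rwa [Nat.Prime.eq_one_of_pow hp, pow_one] at hp
  · obtain ⟨q, hq⟩ := Km_mul_pow_dvd_Km_pow_succ m (by omega : 0 < n) k
    have hKm : (A ^ Km m n) ^ n ^ k = 1 :=
      Matrix.GeneralLinearGroup.pow_eq_one_of_map_eq_one (by rw [map_pow]; exact hA _)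
    rw [hq, pow_mul, pow_mul, hKm, one_pow]

theorem stmt11 (m : ℕ) (hm : 2 ≤ m) (n : ℕ) (h : IsMCarmichael m n)
    (k : ℕ) (hk : 0 < k) : IsMCarmichael m (n ^ k) :=
  stmt11_general m n h k hk
end

section
/- Let p be a prime dividing n, k ≥ 1, m ≥ k. Then GL(m, ℤ/nℤ) contains an element of order p^k - 1. -/
/-!
Multiplication by a generator of `𝔽_{p^k}ˣ` on the `m`-dimensional `𝔽_p`-algebra
`𝔽_{p^k} × 𝔽_p^{m-k}` gives an element of order `p^k - 1` in `GL(m, 𝔽_p)`. Lift it to any matrix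
`B` over `ℤ/p^eℤ`. The kernel of reduction mod `p` consists of matrices `1 + pY`, which satisfy
`(1 + pY)^(p^(e-1)) = 1`; as `p^k - 1` is prime to `p`, the power `B^(p^(e-1))` is invertible of
order exactly `p^k - 1`. Finally `ℤ/nℤ ≅ ℤ/p^eℤ × ℤ/(n/p^e)ℤ`, and `GL(m, ℤ/p^eℤ)` embeds into
`GL(m, ℤ/nℤ)` by taking the identity in the second factor.
-/

theorem exists_orderOf_eq_of_injective {M N : Type*} [Monoid M] [Monoid N] {f : M →* N}
    (hf : Function.Injective f) {d : ℕ} (h : ∃ x : M, orderOf x = d) :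
    ∃ y : N, orderOf y = d := by
  obtain ⟨x, rfl⟩ := h
  exact ⟨f x, orderOf_injective f hf x⟩

theorem exists_orderOf_eq_orderOf_map_of_coprime {M N : Type*} [Monoid M] [Monoid N]
    (π : M →* N) {e : ℕ} (hker : ∀ g, π g = 1 → g ^ e = 1) (g : M)
    (hg : (orderOf (π g)).Coprime e) : ∃ c : M, orderOf c = orderOf (π g) := by
  refine ⟨g ^ e, Nat.dvd_antisymm ?_ ?_⟩
  · apply orderOf_dvd_of_pow_eq_one
    rw [← pow_mul, mul_comm, pow_mul]
    exact hker _ (by rw [map_pow, pow_orderOf_eq_one])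
  · simpa [hg.orderOf_pow] using orderOf_map_dvd π (g ^ e)

theorem exists_unit_orderOf_eq_of_surjective {A B : Type*} [Ring A] [Ring B] {f : A →+* B}
    (hf : Function.Surjective f) {e : ℕ} (hker : ∀ x, f x = 0 → (1 + x) ^ e = 1) {d : ℕ}
    (hd : d ≠ 0) (hde : d.Coprime e) (h : ∃ b : Bˣ, orderOf b = d) :
    ∃ a : Aˣ, orderOf a = d := by
  obtain ⟨b, rfl⟩ := h
  obtain ⟨g, hg⟩ := hf b
  have hker_mul : ∀ g, (f : A →* B) g = 1 → g ^ e = 1 := fun g hg ↦ by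
    simpa using hker (g - 1) (by simpa [sub_eq_zero] using hg)
  obtain ⟨c, hc⟩ := exists_orderOf_eq_orderOf_map_of_coprime (f : A →* B) hker_mul g
    (by simpa [hg, orderOf_units] using hde)
  simp only [MonoidHom.coe_coe, hg, orderOf_units] at hc
  have hunit : IsUnit c := .of_pow_eq_one (hc ▸ pow_orderOf_eq_one c) hd
  exact ⟨hunit.unit, by rw [← orderOf_units, hunit.unit_spec, hc]⟩

theorem one_add_natCast_mul_pow_eq_one {A : Type*} [Ring A] {p j : ℕ}
    (hp : (p : A) ^ (j + 1) = 0) (y : A) : (1 + p * y) ^ p ^ j = 1 := by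
  open Polynomial in
  obtain ⟨q, hq⟩ := dvd_sub_pow_of_dvd_sub (p := p) (a := 1 + (p : ℤ[X]) * X) (b := 1)
    (by simp) j
  simpa [hp, sub_eq_zero] using congrArg (aeval y) hq

theorem ZMod.exists_eq_natCast_mul_of_castHom_eq_zero_s16 {m n : ℕ} (h : m ∣ n) {x : ZMod n}
    (hx : castHom h (ZMod m) x = 0) : ∃ y : ZMod n, x = m * y := by
  rw [castHom_apply, ← intCast_cast, intCast_zmod_eq_zero_iff_dvd] at hx
  obtain ⟨c, hc⟩ := hx
  exact ⟨c, by rw [← intCast_zmod_cast x, hc]; push_cast; rfl⟩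

theorem RingHom.mapMatrix_surjective {ι R S : Type*} [Fintype ι] [DecidableEq ι] [Semiring R]
    [Semiring S] {f : R →+* S} (hf : Function.Surjective f) :
    Function.Surjective (f.mapMatrix : Matrix ι ι R →+* Matrix ι ι S) := fun M ↦
  ⟨M.map (Function.surjInv hf), by ext; simp [Function.surjInv_eq hf]⟩

theorem exists_GL_zmod_pow_orderOf_eq {ι : Type*} [Fintype ι] [DecidableEq ι] {p e d : ℕ}
    (he : e ≠ 0) (hd : d ≠ 0) (hdp : d.Coprime p) (h : ∃ A : GL ι (ZMod p), orderOf A = d) :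
    ∃ A : GL ι (ZMod (p ^ e)), orderOf A = d := by
  obtain ⟨j, rfl⟩ := Nat.exists_eq_add_one_of_ne_zero he
  have hdvd : p ∣ p ^ (j + 1) := dvd_pow_self p j.succ_ne_zero
  let π := ZMod.castHom hdvd (ZMod p)
  refine exists_unit_orderOf_eq_of_surjective (f := π.mapMatrix)
    (RingHom.mapMatrix_surjective (ZMod.castHom_surjective _)) (e := p ^ j) ?_ hd
    (hdp.pow_right j) h
  intro X hX
  have hentry (i k : ι) : ∃ y, X i k = p * y :=
    ZMod.exists_eq_natCast_mul_of_castHom_eq_zero_s16 hdvd (congrFun (congrFun hX i) k)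
  choose Y hY using hentry
  have hXY : X = (p : Matrix ι ι (ZMod (p ^ (j + 1)))) * Matrix.of Y := by
    rw [← nsmul_eq_mul]
    ext i k
    simp [hY]
  rw [hXY, one_add_natCast_mul_pow_eq_one]
  rw [← Nat.cast_pow, ← Matrix.diagonal_natCast, ZMod.natCast_self, Matrix.diagonal_zero]

theorem exists_GL_zmod_orderOf_eq_pow_sub_one {p k m : ℕ} [Fact p.Prime] (hk : k ≠ 0)
    (hkm : k ≤ m) : ∃ A : GL (Fin m) (ZMod p), orderOf A = p ^ k - 1 := by
  let S := GaloisField p k × (Fin (m - k) → ZMod p)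
  have hrank : Module.finrank (ZMod p) S = m := by
    rw [Module.finrank_prod, Module.finrank_fin_fun, GaloisField.finrank p hk]
    omega
  let b := Module.finBasisOfFinrankEq (ZMod p) S hrank
  refine exists_orderOf_eq_of_injective
    (f := Units.map (Algebra.leftMulMatrix b : S →* Matrix (Fin m) (Fin m) (ZMod p)))
    (Units.map_injective (Algebra.leftMulMatrix_injective b)) ?_
  refine exists_orderOf_eq_of_injective
    (f := Units.map (MonoidHom.inl (GaloisField p k) (Fin (m - k) → ZMod p)))
    (Units.map_injective fun _ _ h ↦ congrArg Prod.fst h) ?_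
  obtain ⟨g, hg⟩ := IsCyclic.exists_ofOrder_eq_natCard (α := (GaloisField p k)ˣ)
  exact ⟨g, by rw [hg, Nat.card_units, GaloisField.card p k hk]⟩

noncomputable def Matrix.prodRingEquiv (ι R S : Type*) [Fintype ι] [DecidableEq ι] [Semiring R]
    [Semiring S] : Matrix ι ι (R × S) ≃+* Matrix ι ι R × Matrix ι ι S :=
  .ofBijective ((RingHom.fst R S).mapMatrix.prod (RingHom.snd R S).mapMatrix)
    ⟨fun _ _ h ↦ by ext i j <;> simp_all [← Matrix.ext_iff],
      fun X ↦ ⟨.of fun i j ↦ (X.1 i j, X.2 i j), rfl⟩⟩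

theorem exists_GL_orderOf_eq_of_ringEquiv_prod {ι R S T : Type*} [Fintype ι] [DecidableEq ι]
    [CommRing R] [CommRing S] [CommRing T] (e : T ≃+* R × S) {d : ℕ}
    (h : ∃ A : GL ι R, orderOf A = d) : ∃ A : GL ι T, orderOf A = d := by
  let E := e.mapMatrix.trans (Matrix.prodRingEquiv ι R S)
  refine exists_orderOf_eq_of_injective
    (f := Units.map (E.symm.toMonoidHom.comp (MonoidHom.inl _ (Matrix ι ι S))))
    (Units.map_injective <| by
      rw [MonoidHom.coe_comp]
      exact E.symm.injective.comp fun _ _ h ↦ congrArg Prod.fst h) h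

theorem stmt16 (n p : ℕ) (hn : 0 < n) (hp : p.Prime) (hpn : p ∣ n)
    (k m : ℕ) (hk : 1 ≤ k) (hkm : k ≤ m) :
    ∃ A : GL (Fin m) (ZMod n), orderOf A = p ^ k - 1 := by
  have := Fact.mk hp
  have hpk : 1 < p ^ k := Nat.one_lt_pow (by omega) hp.one_lt
  have hcop : (p ^ k - 1).Coprime p :=
    ((Nat.coprime_self_sub_left hpk.le).mpr (Nat.coprime_one_left _)).coprime_dvd_right
      (dvd_pow_self p (by omega))
  let crt : ZMod n ≃+* ZMod (p ^ n.factorization p) × ZMod (n / p ^ n.factorization p) :=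
    (ZMod.ringEquivCongr (Nat.ordProj_mul_ordCompl_eq_self n p).symm).trans
      (ZMod.chineseRemainder ((Nat.coprime_ordCompl hp hn.ne').pow_left _))
  exact exists_GL_orderOf_eq_of_ringEquiv_prod crt <|
    exists_GL_zmod_pow_orderOf_eq (hp.factorization_pos_of_dvd hn.ne' hpn).ne' (by omega) hcop <|
      exists_GL_zmod_orderOf_eq_pow_sub_one (by omega) hkm
end
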